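/- For all bounded linear operators A, B, X on a complex Hilbert space H, ‖A*AX‖ · ‖X B B*‖ ≥ ‖AXB‖². -/

import Mathlib

/-!
Write `c = a x b`. By the C⋆-identity, `‖c‖²` is the spectral radius of `c⋆ c = b⋆ x⋆ a⋆ a x b`.
Since `r(uv) = r(vu)`, cycling the factors gives `r((a⋆ a x)(x b b⋆)⋆)`, and the spectral radius
is bounded by the norm, which is submultiplicative.
-/

open scoped ENNReal

theorem spectralRadius_mul_comm_le {𝕜 A : Type*} [NormedField 𝕜] [Ring A] [Algebra 𝕜 A]
    (a b : A) : spectralRadius 𝕜 (a * b) ≤ spectralRadius 𝕜 (b * a) := by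
  refine iSup₂_le fun k hk => ?_
  rcases eq_or_ne k 0 with rfl | hk0
  · simp
  · have hba : k ∈ spectrum 𝕜 (b * a) \ {0} :=
      spectrum.nonzero_mul_comm (𝕜 := 𝕜) a b ▸ ⟨hk, hk0⟩
    exact le_iSup₂_of_le k hba.1 le_rfl

theorem spectralRadius_mul_comm {𝕜 A : Type*} [NormedField 𝕜] [Ring A] [Algebra 𝕜 A]
    (a b : A) : spectralRadius 𝕜 (a * b) = spectralRadius 𝕜 (b * a) :=
  (spectralRadius_mul_comm_le a b).antisymm (spectralRadius_mul_comm_le b a)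

theorem CStarAlgebra.spectralRadius_star_mul_self_mul_mul {A : Type*} [CStarAlgebra A]
    (a x b : A) : spectralRadius ℂ (star (a * x * b) * (a * x * b))
      = spectralRadius ℂ (star a * a * x * star (x * b * star b)) :=
  calc spectralRadius ℂ (star (a * x * b) * (a * x * b))
      = spectralRadius ℂ (star b * (star x * star a * a * x * b)) := by
        simp only [star_mul, mul_assoc]
    _ = spectralRadius ℂ (star x * (star a * a * x * b * star b)) := by
        rw [spectralRadius_mul_comm]; simp only [mul_assoc]
    _ = spectralRadius ℂ (star a * a * x * star (x * b * star b)) := by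
        rw [spectralRadius_mul_comm]; simp only [star_mul, star_star, mul_assoc]

theorem CStarAlgebra.norm_mul_mul_sq_le {A : Type*} [CStarAlgebra A] (a x b : A) :
    ‖a * x * b‖ ^ 2 ≤ ‖star a * a * x‖ * ‖x * b * star b‖ := by
  nontriviality A
  have hnnnorm : ‖a * x * b‖₊ ^ 2 ≤ ‖star a * a * x * star (x * b * star b)‖₊ := by
    rw [sq, ← CStarRing.nnnorm_star_mul_self, ← ENNReal.coe_le_coe,
      ← (IsSelfAdjoint.star_mul_self _).spectralRadius_eq_nnnorm,
      spectralRadius_star_mul_self_mul_mul]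
    exact spectrum.spectralRadius_le_nnnorm _
  calc ‖a * x * b‖ ^ 2 ≤ ‖star a * a * x * star (x * b * star b)‖ := by exact_mod_cast hnnnorm
    _ ≤ ‖star a * a * x‖ * ‖star (x * b * star b)‖ := norm_mul_le _ _
    _ = ‖star a * a * x‖ * ‖x * b * star b‖ := by rw [norm_star]

theorem agmi_prod (H : Type*) [NormedAddCommGroup H] [InnerProductSpace ℂ H]
    [CompleteSpace H] (A B X : H →L[ℂ] H) :
    ‖(star A) * A * X‖ * ‖X * B * (star B)‖ ≥ ‖A * X * B‖ ^ 2 :=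
  CStarAlgebra.norm_mul_mul_sq_le A X B
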